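/- If the family of critical independent sets of G equals the family of local maximum independent sets of G, then G is a König–Egerváry graph with a perfect matching. -/

import Mathlib

open Finset

variable {V : Type*}

namespace CrownPaper

variable [Fintype V] [DecidableEq V]

/-- The (open) neighborhood of a finite set of vertices. -/
def nbrs (G : SimpleGraph V) [DecidableRel G.Adj] (A : Finset V) : Finset V :=
  univ.filter (fun v => ∃ a ∈ A, G.Adj v a)

/-- The closed neighborhood `N[A] = A ∪ N(A)`. -/
def closedNbrs (G : SimpleGraph V) [DecidableRel G.Adj] (A : Finset V) : Finset V :=
  A ∪ nbrs G A

/-- `S` is an independent set of `G`. -/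
def IsIndep (G : SimpleGraph V) (S : Finset V) : Prop :=
  ∀ a ∈ S, ∀ b ∈ S, ¬ G.Adj a b

/-- The difference `d(S) = |S| - |N(S)|`. -/
def diff (G : SimpleGraph V) [DecidableRel G.Adj] (S : Finset V) : ℤ :=
  (S.card : ℤ) - ((nbrs G S).card : ℤ)

/-- `S` is a critical independent set. -/
def IsCritIndep (G : SimpleGraph V) [DecidableRel G.Adj] (S : Finset V) : Prop :=
  IsIndep G S ∧ ∀ I : Finset V, IsIndep G I → diff G I ≤ diff G S

/-- `S` is a crown: an independent set with a matching from `N(S)` into `S`. -/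
def IsCrown (G : SimpleGraph V) [DecidableRel G.Adj] (S : Finset V) : Prop :=
  IsIndep G S ∧ ∃ f : V → V, (∀ v ∈ nbrs G S, f v ∈ S ∧ G.Adj v (f v)) ∧
    Set.InjOn f (nbrs G S : Set V)

/-- `S` is a local maximum independent set: a maximum independent set of `G[N[S]]`. -/
def IsLocalMaxIndep (G : SimpleGraph V) [DecidableRel G.Adj] (S : Finset V) : Prop :=
  IsIndep G S ∧ ∀ I : Finset V, IsIndep G I → I ⊆ closedNbrs G S → I.card ≤ S.card

/-- The independence number. -/
noncomputable def alpha (G : SimpleGraph V) : ℕ :=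
  sSup {n | ∃ S : Finset V, IsIndep G S ∧ S.card = n}

/-- `M` is a matching of `G`, given as a finite set of (ordered) edges. -/
def IsMatching (G : SimpleGraph V) (M : Finset (V × V)) : Prop :=
  (∀ e ∈ M, G.Adj e.1 e.2) ∧
  ∀ e ∈ M, ∀ e' ∈ M, e ≠ e' →
    e.1 ≠ e'.1 ∧ e.1 ≠ e'.2 ∧ e.2 ≠ e'.1 ∧ e.2 ≠ e'.2

/-- The matching number. -/
noncomputable def mu (G : SimpleGraph V) : ℕ :=
  sSup {n | ∃ M : Finset (V × V), IsMatching G M ∧ M.card = n}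

/-- `G` has a perfect matching. -/
def HasPerfectMatching (G : SimpleGraph V) : Prop :=
  ∃ M : Finset (V × V), IsMatching G M ∧ ∀ v : V, ∃ e ∈ M, v = e.1 ∨ v = e.2

/-- `G` is a König–Egerváry graph: `α(G) + μ(G) = |V(G)|`. -/
def IsKonigEgervary (G : SimpleGraph V) : Prop :=
  alpha G + mu G = Fintype.card V

/-- `G` is bipartite. -/
def IsBipartite (G : SimpleGraph V) : Prop :=
  ∃ X : Set V, ∀ a b : V, G.Adj a b → (a ∈ X ↔ b ∉ X)

end CrownPaper

open CrownPaper

/-!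
The empty set is a local maximum independent set, hence critical, so `|I| ≤ |N(I)|` for every
independent `I`. A maximum independent set `S` is trivially local maximum, hence critical with
`|N(S)| = |S|`, and `N(S) = V \ S` by maximality. Criticality of `S` gives Hall's condition for
matching `N(S)` into `S`: for `A ⊆ N(S)`, comparing `S \ N(A)` with `S` yields `|A| ≤ |S ∩ N(A)|`.
The resulting matching has `|S|` edges and covers all `2|S| = |V|` vertices, and with the
independent set `S` it witnesses `α + μ ≥ |V|`; the reverse inequality holds in every graph.
-/

namespace CrownPaper

section Independence

variable {G : SimpleGraph V}

lemma isIndep_empty : IsIndep G ∅ := by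
  simp [IsIndep]

lemma IsIndep.mono {S T : Finset V} (hS : IsIndep G S) (hT : T ⊆ S) : IsIndep G T :=
  fun a ha b hb => hS a (hT ha) b (hT hb)

lemma IsMatching.empty : IsMatching G ∅ := by
  simp [IsMatching]

lemma IsMatching.card_image_fst_union_image_snd [DecidableEq V] {M : Finset (V × V)}
    (hM : IsMatching G M) : (M.image Prod.fst ∪ M.image Prod.snd).card = 2 * M.card := by
  have hdisj : Disjoint (M.image Prod.fst) (M.image Prod.snd) := by
    simp only [Finset.disjoint_left, Finset.mem_image, not_exists, not_and]
    rintro _ ⟨e, he, rfl⟩ e' he' heq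
    by_cases hee' : e = e'
    · subst hee'
      exact G.loopless.irrefl _ (heq ▸ hM.1 e he)
    · exact (hM.2 e' he' e he (Ne.symm hee')).2.2.1 heq
  rw [Finset.card_union_of_disjoint hdisj, two_mul]
  congr 1 <;> refine Finset.card_image_of_injOn fun e he e' he' heq => ?_ <;> by_contra hne
  · exact (hM.2 e he e' he' hne).1 heq
  · exact (hM.2 e he e' he' hne).2.2.2 heq

variable [Fintype V]

lemma mem_nbrs [DecidableRel G.Adj] {A : Finset V} {v : V} :
    v ∈ nbrs G A ↔ ∃ a ∈ A, G.Adj v a := by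
  simp [nbrs]

@[simp] lemma nbrs_empty [DecidableRel G.Adj] : nbrs G ∅ = ∅ := by
  simp [nbrs]

@[simp] lemma diff_empty [DecidableRel G.Adj] : diff G ∅ = 0 := by
  simp [diff]

lemma IsIndep.disjoint_nbrs [DecidableRel G.Adj] {S : Finset V} (hS : IsIndep G S) :
    Disjoint S (nbrs G S) := by
  rw [Finset.disjoint_left]
  intro v hv hvN
  obtain ⟨a, ha, hva⟩ := mem_nbrs.1 hvN
  exact hS v hv a ha hva

lemma IsIndep.insert [DecidableEq V] [DecidableRel G.Adj] {S : Finset V} {v : V}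
    (hS : IsIndep G S) (hv : v ∉ nbrs G S) : IsIndep G (insert v S) := by
  intro a ha b hb hab
  rw [Finset.mem_insert] at ha hb
  rcases ha with rfl | ha <;> rcases hb with rfl | hb
  · exact G.loopless.irrefl _ hab
  · exact hv (mem_nbrs.2 ⟨b, hb, hab⟩)
  · exact hv (mem_nbrs.2 ⟨a, ha, hab.symm⟩)
  · exact hS a ha b hb hab

lemma IsIndep.nbrs_eq_compl [DecidableEq V] [DecidableRel G.Adj] {S : Finset V}
    (hS : IsIndep G S) (hmax : ∀ T, IsIndep G T → T.card ≤ S.card) : nbrs G S = Sᶜ := by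
  ext v
  refine ⟨fun hv => Finset.mem_compl.2 fun hvS => Finset.disjoint_left.1 hS.disjoint_nbrs hvS hv,
    fun hvS => ?_⟩
  by_contra hv
  have := hmax _ (hS.insert hv)
  rw [Finset.card_insert_of_notMem (Finset.mem_compl.1 hvS)] at this
  omega

lemma isLocalMaxIndep_empty [DecidableEq V] [DecidableRel G.Adj] : IsLocalMaxIndep G ∅ := by
  refine ⟨isIndep_empty, fun I _ hI => ?_⟩
  simp_all [closedNbrs]

/-- At most one endpoint of each matching edge lies in `S`, so the other ones inject into `Sᶜ`. -/
lemma IsIndep.card_add_card_le_of_isMatching [DecidableEq V] {S : Finset V} {M : Finset (V × V)}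
    (hS : IsIndep G S) (hM : IsMatching G M) : S.card + M.card ≤ Fintype.card V := by
  have hmaps : ∀ e ∈ M, (if e.1 ∈ S then e.2 else e.1) ∈ Sᶜ := by
    intro e he
    rw [Finset.mem_compl]
    split_ifs with h1
    · exact fun h2 => hS e.1 h1 e.2 h2 (hM.1 e he)
    · exact h1
  have hinj : Set.InjOn (fun e : V × V => if e.1 ∈ S then e.2 else e.1) M := by
    intro e he e' he' heq
    by_contra hne
    obtain ⟨h1, h2, h3, h4⟩ := hM.2 e he e' he' hne
    simp only at heq
    split_ifs at heq <;> simp_all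
  have := Finset.card_le_card_of_injOn _ hmaps hinj
  rw [Finset.card_compl] at this
  have := S.card_le_univ
  omega

lemma IsMatching.hasPerfectMatching [DecidableEq V] {M : Finset (V × V)} (hM : IsMatching G M)
    (hcard : 2 * M.card = Fintype.card V) : HasPerfectMatching G := by
  have hcover := Finset.eq_univ_of_card _ (hM.card_image_fst_union_image_snd.trans hcard)
  refine ⟨M, hM, fun v => ?_⟩
  have hv := hcover ▸ Finset.mem_univ v
  simp only [Finset.mem_union, Finset.mem_image] at hv
  rcases hv with ⟨e, he, rfl⟩ | ⟨e, he, rfl⟩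
  exacts [⟨e, he, Or.inl rfl⟩, ⟨e, he, Or.inr rfl⟩]

end Independence

section Numbers

variable {G : SimpleGraph V}

lemma mu_le {n : ℕ} (h : ∀ M, IsMatching G M → M.card ≤ n) : mu G ≤ n :=
  csSup_le ⟨0, ∅, IsMatching.empty, rfl⟩ (by rintro _ ⟨M, hM, rfl⟩; exact h M hM)

variable [Fintype V]

lemma bddAbove_card_isIndep : BddAbove {n | ∃ S : Finset V, IsIndep G S ∧ S.card = n} :=
  ⟨Fintype.card V, by rintro _ ⟨S, -, rfl⟩; exact S.card_le_univ⟩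

lemma le_alpha {S : Finset V} (hS : IsIndep G S) : S.card ≤ alpha G :=
  le_csSup bddAbove_card_isIndep ⟨S, hS, rfl⟩

variable (G) in
lemma exists_isIndep_card_eq_alpha : ∃ S : Finset V, IsIndep G S ∧ S.card = alpha G :=
  Nat.sSup_mem (s := {n | ∃ S : Finset V, IsIndep G S ∧ S.card = n}) ⟨0, ∅, isIndep_empty, rfl⟩
    bddAbove_card_isIndep

lemma bddAbove_card_isMatching [DecidableEq V] :
    BddAbove {n | ∃ M : Finset (V × V), IsMatching G M ∧ M.card = n} :=
  ⟨Fintype.card V, by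
    rintro _ ⟨M, hM, rfl⟩
    simpa using isIndep_empty.card_add_card_le_of_isMatching hM⟩

lemma le_mu [DecidableEq V] {M : Finset (V × V)} (hM : IsMatching G M) : M.card ≤ mu G :=
  le_csSup bddAbove_card_isMatching ⟨M, hM, rfl⟩

variable (G) in
lemma alpha_add_mu_le [DecidableEq V] : alpha G + mu G ≤ Fintype.card V := by
  obtain ⟨T, hT, hTα⟩ := exists_isIndep_card_eq_alpha G
  have hμ : mu G ≤ Fintype.card V - T.card :=
    mu_le fun M hM => by have := hT.card_add_card_le_of_isMatching hM; omega
  have := T.card_le_univ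
  omega

theorem isKonigEgervary_of_card_add_card_eq [DecidableEq V] {S : Finset V}
    {M : Finset (V × V)} (hS : IsIndep G S) (hM : IsMatching G M)
    (hcard : S.card + M.card = Fintype.card V) : IsKonigEgervary G :=
  le_antisymm (alpha_add_mu_le G) (hcard ▸ add_le_add (le_alpha hS) (le_mu hM))

end Numbers

section Crown

variable [Fintype V] [DecidableEq V] {G : SimpleGraph V} [DecidableRel G.Adj]

lemma nbrs_sdiff_nbrs_subset (S A : Finset V) : nbrs G (S \ nbrs G A) ⊆ nbrs G S \ A := by
  intro v hv
  obtain ⟨s, hs, hvs⟩ := mem_nbrs.1 hv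
  rw [Finset.mem_sdiff] at hs ⊢
  exact ⟨mem_nbrs.2 ⟨s, hs.1, hvs⟩, fun hvA => hs.2 (mem_nbrs.2 ⟨v, hvA, hvs.symm⟩)⟩

/-- Hall's condition for matching `N(S)` into `S`: compare `d(S \ N(A)) ≤ d(S)`. -/
lemma IsCritIndep.card_le_card_inter_nbrs {S A : Finset V} (hS : IsCritIndep G S)
    (hA : A ⊆ nbrs G S) : A.card ≤ (S ∩ nbrs G A).card := by
  have hd := hS.2 _ (hS.1.mono (Finset.sdiff_subset (s := S) (t := nbrs G A)))
  have hN := Finset.card_le_card (nbrs_sdiff_nbrs_subset (G := G) S A)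
  rw [Finset.card_sdiff_of_subset hA] at hN
  have := Finset.card_sdiff_add_card_inter S (nbrs G A)
  have := Finset.card_le_card hA
  unfold diff at hd
  omega

theorem IsCritIndep.isCrown {S : Finset V} (hS : IsCritIndep G S) : IsCrown G S := by
  obtain ⟨f, hf_inj, hf⟩ := (Finset.all_card_le_biUnion_card_iff_existsInjective'
      fun v : nbrs G S => S.filter (G.Adj v)).1 fun s => by
    calc s.card = (s.map (Function.Embedding.subtype _)).card := (Finset.card_map _).symm
      _ ≤ (S ∩ nbrs G (s.map (Function.Embedding.subtype _))).card :=
        hS.card_le_card_inter_nbrs fun v hv => by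
          obtain ⟨w, -, rfl⟩ := Finset.mem_map.1 hv
          exact w.2
      _ ≤ (s.biUnion fun v => S.filter (G.Adj v)).card := Finset.card_le_card fun w hw => by
          obtain ⟨hwS, hwN⟩ := Finset.mem_inter.1 hw
          obtain ⟨_, hv, hwv⟩ := mem_nbrs.1 hwN
          obtain ⟨v, hvs, rfl⟩ := Finset.mem_map.1 hv
          exact Finset.mem_biUnion.2 ⟨v, hvs, Finset.mem_filter.2 ⟨hwS, hwv.symm⟩⟩
  refine ⟨hS.1, fun v => if hv : v ∈ nbrs G S then f ⟨v, hv⟩ else v, fun v hv => ?_, ?_⟩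
  · simpa [hv] using hf ⟨v, hv⟩
  · intro v hv w hw hvw
    simp only [Finset.mem_coe] at hv hw
    simp only [hv, hw, dite_true] at hvw
    exact congrArg Subtype.val (hf_inj hvw)

theorem IsCrown.exists_isMatching {S : Finset V} (hS : IsCrown G S) :
    ∃ M, IsMatching G M ∧ M.card = (nbrs G S).card := by
  obtain ⟨hSi, f, hf, hf_inj⟩ := hS
  refine ⟨(nbrs G S).image fun v => (v, f v), ⟨?_, ?_⟩,
    Finset.card_image_of_injective _ fun v w h => congrArg Prod.fst h⟩
  · simp only [Finset.mem_image]
    rintro _ ⟨v, hv, rfl⟩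
    exact (hf v hv).2
  · simp only [Finset.mem_image]
    rintro _ ⟨v, hv, rfl⟩ _ ⟨w, hw, rfl⟩ hne
    have hvw : v ≠ w := by rintro rfl; exact hne rfl
    have hS_N := Finset.disjoint_left.1 hSi.disjoint_nbrs
    refine ⟨hvw, fun (h : v = f w) => hS_N (h ▸ (hf w hw).1) hv,
      fun (h : f v = w) => hS_N (h ▸ (hf v hv).1) hw,
      fun h => hvw (hf_inj hv hw h)⟩

end Crown

end CrownPaper

theorem crit_eq_psi_implies_ke_pm (G : SimpleGraph V) [Fintype V] [DecidableEq V]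
    [DecidableRel G.Adj] (h : ∀ S : Finset V, IsCritIndep G S ↔ IsLocalMaxIndep G S) :
    IsKonigEgervary G ∧ HasPerfectMatching G := by
  have hdiff_le : ∀ I, IsIndep G I → diff G I ≤ 0 := fun I hI => by
    simpa using ((h ∅).2 isLocalMaxIndep_empty).2 I hI
  obtain ⟨S, hS, hSα⟩ := exists_isIndep_card_eq_alpha G
  have hmax : ∀ T, IsIndep G T → T.card ≤ S.card := fun T hT => hSα ▸ le_alpha hT
  have hcrit : IsCritIndep G S := (h S).2 ⟨hS, fun I hI _ => hmax I hI⟩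
  have hdiff : diff G S = 0 :=
    le_antisymm (hdiff_le S hS) (by simpa using hcrit.2 ∅ isIndep_empty)
  obtain ⟨M, hM, hMcard⟩ := hcrit.isCrown.exists_isMatching
  have hN : (nbrs G S).card = Fintype.card V - S.card := by
    rw [hS.nbrs_eq_compl hmax, Finset.card_compl]
  have := S.card_le_univ
  unfold diff at hdiff
  exact ⟨isKonigEgervary_of_card_add_card_eq hS hM (by omega), hM.hasPerfectMatching (by omega)⟩
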